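/- arXiv:2508.05324 — 4 statements merged into one kernel-verified Lean document; each statement's English description precedes it below -/
import Mathlib

section
/- Let ᾱ be a real number with 0 < ᾱ < π/2 and let θ be a real number with 0 ≤ θ ≤ π. Then cos(ᾱ + θ) · exp(−cot(ᾱ)·θ) ≤ cos(ᾱ). -/
open Real

theorem stmt0 (α θ : ℝ) (hα0 : 0 < α) (hα1 : α < π / 2)
    (hθ0 : 0 ≤ θ) (hθ1 : θ ≤ π) :
    Real.cos (α + θ) * Real.exp (-Real.cot α * θ) ≤ Real.cos α := by
  have hcosα : 0 < Real.cos α :=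
    Real.cos_pos_of_mem_Ioo ⟨by linarith [Real.pi_pos], hα1⟩
  rcases le_or_gt (Real.cos (α + θ)) 0 with h | h
  · have : Real.cos (α + θ) * Real.exp (-Real.cot α * θ) ≤ 0 :=
      mul_nonpos_of_nonpos_of_nonneg h (Real.exp_pos _).le
    linarith
  · have hcot : 0 ≤ Real.cot α := by
      rw [Real.cot_eq_cos_div_sin]
      have hsin : 0 < Real.sin α := Real.sin_pos_of_pos_of_lt_pi hα0 (by linarith [Real.pi_pos])
      positivity
    have hexp : Real.exp (-Real.cot α * θ) ≤ 1 := by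
      rw [Real.exp_le_one_iff]
      nlinarith
    have hle : α + θ ≤ π := by
      by_contra hgt
      push_neg at hgt
      have : Real.cos (α + θ) < 0 :=
        Real.cos_neg_of_pi_div_two_lt_of_lt (by linarith) (by linarith)
      linarith
    have hcc : Real.cos (α + θ) ≤ Real.cos α :=
      Real.cos_le_cos_of_nonneg_of_le_pi hα0.le hle (by linarith)
    nlinarith [(Real.exp_pos (-Real.cot α * θ)).le]
end

section
/- Let ᾱ be a real number with 0 < ᾱ < π/2 and let θ be a real number with 0 ≤ θ ≤ π. Define f : ℝ → ℝ by f(x) = −exp(cot(ᾱ)·(x+θ)) + (cos(θ+ᾱ)/cos(ᾱ))·(exp(cot(ᾱ)·x) − 1). Then for every real x, f is twice differentiable at x, its second derivative equals −(cot(ᾱ)/sin(ᾱ))·exp(cot(ᾱ)·(x+θ))·(cos(ᾱ) − cos(ᾱ+θ)·exp(−cot(ᾱ)·θ)), and this second derivative is ≤ 0; in particular f is concave on ℝ. -/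
/-! Writing `c = cot ᾱ > 0`, the function is `-e^{c(x+θ)} + k (e^{cx} - 1)`, whose second derivative
is `c² (-e^{c(x+θ)} + k e^{cx})`. Factoring out `e^{c(x+θ)}`, its sign is that of
`-(cos ᾱ - cos (ᾱ + θ) e^{-cθ})`, and the bracket is nonnegative: either `cos (ᾱ + θ) ≤ 0`, or
`ᾱ + θ ≤ π`, so that `cos (ᾱ + θ) ≤ cos ᾱ` while `e^{-cθ} ≤ 1`. -/

open Real

noncomputable def expProfile (c θ k b x : ℝ) : ℝ :=
  -exp (c * (x + θ)) + k * (exp (c * x) - b)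

section ExpProfile

variable (c θ k b : ℝ)

theorem hasDerivAt_expProfile (x : ℝ) :
    HasDerivAt (expProfile c θ k b) (c * expProfile c θ k 0 x) x := by
  have hshift : HasDerivAt (fun x => exp (c * (x + θ))) (c * exp (c * (x + θ))) x := by
    simpa [mul_comm] using (((hasDerivAt_id x).add_const θ).const_mul c).exp
  have hlin : HasDerivAt (fun x => exp (c * x)) (c * exp (c * x)) x := by
    simpa [mul_comm] using ((hasDerivAt_id x).const_mul c).exp
  exact (hshift.neg.add ((hlin.sub_const b).const_mul k)).congr_deriv (by rw [expProfile]; ring)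

theorem deriv_expProfile :
    deriv (expProfile c θ k b) = fun x => c * expProfile c θ k 0 x :=
  funext fun x => (hasDerivAt_expProfile c θ k b x).deriv

theorem deriv_deriv_expProfile :
    deriv (deriv (expProfile c θ k b)) = fun x => c ^ 2 * expProfile c θ k 0 x := by
  funext x
  rw [deriv_expProfile, deriv_const_mul _ (hasDerivAt_expProfile c θ k 0 x).differentiableAt,
    deriv_expProfile]
  ring

theorem contDiff_expProfile {n : WithTop ℕ∞} : ContDiff ℝ n (expProfile c θ k b) := by
  unfold expProfile
  fun_prop

end ExpProfile

theorem cot_pos_of_mem_Ioo {α : ℝ} (hα0 : 0 < α) (hα1 : α < π / 2) : 0 < cot α := by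
  rw [cot_eq_cos_div_sin]
  exact div_pos (cos_pos_of_mem_Ioo ⟨by linarith, hα1⟩)
    (sin_pos_of_pos_of_lt_pi hα0 (by linarith [pi_pos]))

theorem cos_add_mul_exp_neg_cot_mul_le {α θ : ℝ} (hα0 : 0 < α) (hα1 : α < π / 2)
    (hθ0 : 0 ≤ θ) (hθ1 : θ ≤ π) : cos (α + θ) * exp (-cot α * θ) ≤ cos α := by
  have hcos : 0 < cos α := cos_pos_of_mem_Ioo ⟨by linarith, hα1⟩
  rcases le_or_gt (cos (α + θ)) 0 with hnonpos | hpos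
  · nlinarith [exp_pos (-cot α * θ)]
  · have hle : α + θ ≤ π := by
      by_contra! hgt
      linarith [cos_nonpos_of_pi_div_two_le_of_le (x := α + θ) (by linarith) (by linarith)]
    have hcos_le : cos (α + θ) ≤ cos α := cos_le_cos_of_nonneg_of_le_pi hα0.le hle (by linarith)
    have hexp_le : exp (-cot α * θ) ≤ 1 :=
      exp_le_one_iff.mpr (by nlinarith [cot_pos_of_mem_Ioo hα0 hα1])
    nlinarith [exp_pos (-cot α * θ)]

theorem cot_sq_mul_expProfile_eq {α : ℝ} (hsin : sin α ≠ 0) (hcos : cos α ≠ 0) (θ x : ℝ) :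
    cot α ^ 2 * expProfile (cot α) θ (cos (θ + α) / cos α) 0 x =
      -(cot α / sin α) * exp (cot α * (x + θ)) *
        (cos α - cos (α + θ) * exp (-cot α * θ)) := by
  have hexp : exp (cot α * (x + θ)) * exp (-cot α * θ) = exp (cot α * x) := by
    rw [← exp_add]
    ring_nf
  rw [expProfile, sub_zero, ← hexp, add_comm θ α, cot_eq_cos_div_sin]
  field_simp
  ring

theorem stmt1 (α θ : ℝ) (hα0 : 0 < α) (hα1 : α < π / 2)
    (hθ0 : 0 ≤ θ) (hθ1 : θ ≤ π) :
    let f : ℝ → ℝ := fun x =>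
      -Real.exp (Real.cot α * (x + θ)) +
        (Real.cos (θ + α) / Real.cos α) * (Real.exp (Real.cot α * x) - 1)
    (∀ x : ℝ, ContDiffAt ℝ 2 f x) ∧
    (∀ x : ℝ, deriv (deriv f) x =
      -(Real.cot α / Real.sin α) * Real.exp (Real.cot α * (x + θ)) *
        (Real.cos α - Real.cos (α + θ) * Real.exp (-Real.cot α * θ))) ∧
    (∀ x : ℝ, deriv (deriv f) x ≤ 0) ∧
    ConcaveOn ℝ Set.univ f := by
  intro f
  have hf : f = expProfile (cot α) θ (cos (θ + α) / cos α) 1 := rfl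
  have hsin : 0 < sin α := sin_pos_of_pos_of_lt_pi hα0 (by linarith [pi_pos])
  have hcos : 0 < cos α := cos_pos_of_mem_Ioo ⟨by linarith, hα1⟩
  have hf'' : ∀ x, deriv (deriv f) x = -(cot α / sin α) * exp (cot α * (x + θ)) *
      (cos α - cos (α + θ) * exp (-cot α * θ)) := fun x => by
    rw [hf, deriv_deriv_expProfile]
    exact cot_sq_mul_expProfile_eq hsin.ne' hcos.ne' θ x
  have hf''_nonpos : ∀ x, deriv (deriv f) x ≤ 0 := fun x => by
    rw [hf'', neg_mul, neg_mul, neg_nonpos]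
    have := cos_add_mul_exp_neg_cot_mul_le hα0 hα1 hθ0 hθ1
    have := (cot_pos_of_mem_Ioo hα0 hα1).le
    positivity
  refine ⟨fun x => (hf ▸ contDiff_expProfile _ _ _ _).contDiffAt, hf'', hf''_nonpos, ?_⟩
  have hdiff (b : ℝ) : Differentiable ℝ (expProfile (cot α) θ (cos (θ + α) / cos α) b) :=
    (contDiff_expProfile (n := 1) _ _ _ _).differentiable one_ne_zero
  refine concaveOn_univ_of_deriv2_nonpos (hf ▸ hdiff 1) ?_ hf''_nonpos
  rw [hf, deriv_expProfile]
  exact (hdiff 0).const_mul _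
end

section
/- Let c be a real number. Define g : ℝ → ℝ by g(τ) = Σ_{k=0}^{∞} (−1)^k · exp(c·(τ − k)) · (τ − k)^k / k! · 𝟙_{τ ≥ k} (a finite sum for each τ), and g(τ) = 0 for τ < 0. Then for every real τ > 0 that is not a natural number, g is differentiable at τ and g′(τ) = c·g(τ) − g(τ − 1). -/
/-!
On `(n - 1, n)` only the terms `k < n` of the series survive, so there `g` is the partial sum
`S n = ∑_{k<n}`. Differentiating the `k`-th term gives `c` times itself minus the `(k - 1)`-st term
evaluated at `τ - 1` (the factor `k` from the power cancels against `k!`), hence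
`S (n + 1)' τ = c · S (n + 1) τ - S n (τ - 1)`, and both sums agree with `g` at `τ` and `τ - 1`.
-/

open Real Set Filter Topology

noncomputable section

namespace DelayFundamentalSolution

def term (c : ℝ) (k : ℕ) (t : ℝ) : ℝ :=
  (-1) ^ k * exp (c * (t - k)) * (t - k) ^ k / k.factorial

def partialSum (c : ℝ) (n : ℕ) (t : ℝ) : ℝ :=
  ∑ k ∈ Finset.range n, term c k t

def sol (c : ℝ) (t : ℝ) : ℝ :=
  ∑' k : ℕ, if (k : ℝ) ≤ t then term c k t else 0

variable (c : ℝ)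

theorem hasDerivAt_term_zero (t : ℝ) : HasDerivAt (term c 0) (c * term c 0 t) t := by
  have hfun : term c 0 = fun s => exp (c * s) := by ext; simp [term]
  rw [hfun]
  simpa [mul_comm] using ((hasDerivAt_id t).const_mul c).exp

theorem hasDerivAt_term_succ (k : ℕ) (t : ℝ) :
    HasDerivAt (term c (k + 1)) (c * term c (k + 1) t - term c k (t - 1)) t := by
  have hlin : HasDerivAt (fun s : ℝ => s - ((k + 1 : ℕ) : ℝ)) 1 t := (hasDerivAt_id t).sub_const _
  refine ((((hlin.const_mul c).exp.const_mul ((-1 : ℝ) ^ (k + 1))).fun_mul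
    (hlin.fun_pow (k + 1))).div_const ((k + 1).factorial : ℝ)).congr_deriv ?_
  have hk : ((k + 1).factorial : ℝ) = (k + 1) * k.factorial := by
    push_cast [Nat.factorial_succ]; ring
  have hshift : t - ((k + 1 : ℕ) : ℝ) = t - 1 - k := by push_cast; ring
  simp only [term, hk, hshift, Nat.add_sub_cancel, pow_succ]
  push_cast
  field_simp
  ring

theorem partialSum_zero : partialSum c 0 = 0 := by
  ext t
  simp only [partialSum, Finset.range_zero, Finset.sum_empty, Pi.zero_apply]

theorem partialSum_succ (n : ℕ) :
    partialSum c (n + 1) = partialSum c n + term c n := by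
  ext t
  simp only [partialSum, Finset.sum_range_succ, Pi.add_apply]

theorem hasDerivAt_partialSum_succ (n : ℕ) (t : ℝ) :
    HasDerivAt (partialSum c (n + 1)) (c * partialSum c (n + 1) t - partialSum c n (t - 1)) t := by
  induction n with
  | zero =>
    simpa [partialSum_succ, partialSum_zero] using hasDerivAt_term_zero c t
  | succ n ih =>
    rw [partialSum_succ c (n + 1)]
    refine (ih.add (hasDerivAt_term_succ c n t)).congr_deriv ?_
    simp only [partialSum_succ, Pi.add_apply]
    ring

theorem eqOn_sol_partialSum (n : ℕ) : EqOn (sol c) (partialSum c n) (Ioo ((n : ℝ) - 1) n) := by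
  intro t ⟨hlo, hhi⟩
  have hmem : ∀ k : ℕ, (k : ℝ) ≤ t ↔ k ∈ Finset.range n := by
    intro k
    rw [Finset.mem_range]
    constructor
    · intro hk
      exact_mod_cast hk.trans_lt hhi
    · intro hk
      have : (k : ℝ) ≤ n - 1 := by
        rw [le_sub_iff_add_le]; exact_mod_cast hk
      linarith
  rw [sol, tsum_eq_sum (s := Finset.range n) fun k hk => if_neg (mt (hmem k).mp hk)]
  exact Finset.sum_congr rfl fun k hk => if_pos ((hmem k).mpr hk)

theorem hasDerivAt_sol {τ : ℝ} (hτ : 0 < τ) (hne : ∀ n : ℕ, τ ≠ n) :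
    HasDerivAt (sol c) (c * sol c τ - sol c (τ - 1)) τ := by
  set N := ⌊τ⌋₊
  have hlo : (N : ℝ) < τ := (Nat.floor_le hτ.le).lt_of_ne (hne N).symm
  have hhi : τ < N + 1 := Nat.lt_floor_add_one τ
  have hEqOn : EqOn (sol c) (partialSum c (N + 1)) (Ioo N (N + 1)) := by
    simpa using eqOn_sol_partialSum c (N + 1)
  have hprev : sol c (τ - 1) = partialSum c N (τ - 1) :=
    eqOn_sol_partialSum c N ⟨by linarith, by linarith⟩
  rw [hEqOn ⟨hlo, hhi⟩, hprev]
  exact (hasDerivAt_partialSum_succ c N τ).congr_of_eventuallyEq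
    (hEqOn.eventuallyEq_of_mem (Ioo_mem_nhds hlo hhi))

end DelayFundamentalSolution

end

open Real

theorem stmt7 (c : ℝ) :
    let g : ℝ → ℝ := fun τ => ∑' k : ℕ,
      if (k : ℝ) ≤ τ then
        (-1) ^ k * Real.exp (c * (τ - k)) * (τ - k) ^ k / (Nat.factorial k) else 0
    ∀ τ : ℝ, 0 < τ → (∀ n : ℕ, τ ≠ n) →
      HasDerivAt g (c * g τ - g (τ - 1)) τ :=
  fun _ hτ hne => DelayFundamentalSolution.hasDerivAt_sol c hτ hne
end

section
/- Let α be a real number, λ a nonzero real number, and K a real number. Define ρ : ℝ → ℝ by ρ(τ) = exp((α − 1/λ)·(τ − 1)). Then the eigenvalue equation λ·ρ(τ) = K·exp(α·τ) − ∫₀^τ exp(α·(τ − s))·ρ(s) ds holds for all real τ if and only if K = λ·exp(−α + 1/λ). -/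
open Real

theorem stmt10 (α l K : ℝ) (hl : l ≠ 0) :
    let ρ : ℝ → ℝ := fun τ => Real.exp ((α - 1 / l) * (τ - 1))
    (∀ τ : ℝ, l * ρ τ =
      K * Real.exp (α * τ) - ∫ s in (0:ℝ)..τ, Real.exp (α * (τ - s)) * ρ s) ↔
    K = l * Real.exp (-α + 1 / l) := by
  intro ρ
  constructor
  · intro h
    have h0 := h 0
    simp only [ρ, intervalIntegral.integral_same, mul_zero, Real.exp_zero, mul_one,
      sub_zero] at h0
    have : (α - 1 / l) * (0 - 1) = -α + 1 / l := by ring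
    rw [this] at h0
    linarith
  · intro hK τ
    have hexp : ∀ s : ℝ, Real.exp (α * (τ - s)) * ρ s
        = Real.exp (α * τ - (α - 1 / l)) * Real.exp ((-1 / l) * s) := by
      intro s
      simp only [ρ, ← Real.exp_add]
      ring_nf
    have hint : (∫ s in (0:ℝ)..τ, Real.exp (α * (τ - s)) * ρ s)
        = Real.exp (α * τ - (α - 1 / l)) * ((-(1 / l))⁻¹ * (Real.exp (-1 / l * τ) - 1)) := by
      simp only [hexp]
      rw [intervalIntegral.integral_const_mul]
      congr 1
      have hne : (-1 : ℝ) / l ≠ 0 := by simp [hl]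
      have := intervalIntegral.integral_comp_mul_left (a := (0:ℝ)) (b := τ)
        (fun x => Real.exp x) (c := -1 / l)
      rw [this hne, integral_exp]
      simp [neg_div, smul_eq_mul]

    rw [hint, hK]
    have h1 : Real.exp (α * τ - (α - 1 / l)) = Real.exp (α * τ) * Real.exp (-α + 1/l) := by
      rw [← Real.exp_add]; ring_nf
    have h2 : Real.exp (α * τ - (α - 1 / l)) * Real.exp (-1 / l * τ)
        = ρ τ := by
      simp only [ρ, ← Real.exp_add]; ring_nf
    have hl' : (-(1 / l))⁻¹ = -l := by field_simp
    rw [hl']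
    simp only [ρ] at h2 ⊢
    linear_combination (-l) * h2 + l * h1
end
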